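/- Let p be a prime, θ, q ∈ ℚ_p with 0 < |θ−1|_p < |q|_p < 1, and f(x) = ((θx + q − 1)/(x + θ + q − 2))³. For every x ∈ ℚ_p with |x−1|_p < |q|_p, one has |f(x) − 1|_p ≤ (|θ−1|_p/|q|_p)·|x−1|_p. In particular the open ball {x : |x−1|_p < |q|_p} is mapped into itself, and all its points converge to the fixed point 1 under iteration of f. -/

import Mathlib

/-!
Write `f(x) = (N/D)³` with `N = θx + q - 1` and `D = x + θ + q - 2`. Then `N - D = (θ-1)(x-1)`,
and on the ball `|x-1| < |q|` the ultrametric inequality forces `|D| = |q|` and `|N| ≤ |q|`.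
Hence `f(x) - 1 = (N³ - D³)/D³ = (N - D)(N² + ND + D²)/D³` has norm at most
`|θ-1||x-1||q|²/|q|³`, a contraction towards `1` with ratio `|θ-1|/|q| < 1`.
-/

open Filter Topology Metric IsUltrametricDist

section Ultrametric

variable {K : Type*} [NormedField K] [IsUltrametricDist K]

theorem norm_pow_sub_pow_le {x y : K} {r : ℝ} (hx : ‖x‖ ≤ r) (hy : ‖y‖ ≤ r) (n : ℕ) :
    ‖x ^ n - y ^ n‖ ≤ ‖x - y‖ * r ^ (n - 1) := by
  have hr : 0 ≤ r := (norm_nonneg x).trans hx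
  rw [← geom_sum₂_mul, norm_mul, mul_comm]
  gcongr
  refine norm_sum_le_of_forall_le_of_nonneg (by positivity) fun i hi => ?_
  have hi : i ≤ n - 1 := Nat.le_sub_one_of_lt (Finset.mem_range.mp hi)
  calc ‖x ^ i * y ^ (n - 1 - i)‖ = ‖x‖ ^ i * ‖y‖ ^ (n - 1 - i) := by rw [norm_mul, norm_pow, norm_pow]
    _ ≤ r ^ i * r ^ (n - 1 - i) := by gcongr
    _ = r ^ (n - 1) := by rw [← pow_add, Nat.add_sub_cancel' hi]

theorem norm_div_pow_sub_one_le {x y : K} (hxy : ‖x‖ ≤ ‖y‖) (hy : y ≠ 0) (n : ℕ) :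
    ‖(x / y) ^ n - 1‖ ≤ ‖x - y‖ / ‖y‖ := by
  rcases n with _ | n
  · simp only [pow_zero, sub_self, norm_zero]
    positivity
  have hy' : 0 < ‖y‖ := norm_pos_iff.mpr hy
  rw [div_pow, div_sub_one (pow_ne_zero _ hy), norm_div, norm_pow, div_le_div_iff₀ (by positivity) hy']
  calc ‖x ^ (n + 1) - y ^ (n + 1)‖ * ‖y‖ ≤ ‖x - y‖ * ‖y‖ ^ n * ‖y‖ := by
        gcongr
        exact norm_pow_sub_pow_le hxy le_rfl (n + 1)
    _ = ‖x - y‖ * ‖y‖ ^ (n + 1) := by ring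

end Ultrametric

section MetricSpace

variable {α : Type*} [PseudoMetricSpace α] {f : α → α} {a : α} {ρ r : ℝ}

theorem mapsTo_ball_of_dist_le_mul (hr : r ≤ 1)
    (hf : ∀ x ∈ ball a ρ, dist (f x) a ≤ r * dist x a) : Set.MapsTo f (ball a ρ) (ball a ρ) :=
  fun x hx => (hf x hx).trans_lt <|
    (mul_le_of_le_one_left dist_nonneg hr).trans_lt (mem_ball.mp hx)

theorem tendsto_iterate_of_dist_le_mul (hr₀ : 0 ≤ r) (hr₁ : r < 1)
    (hf : ∀ x ∈ ball a ρ, dist (f x) a ≤ r * dist x a) {x : α} (hx : x ∈ ball a ρ) :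
    Tendsto (fun n => f^[n] x) atTop (𝓝 a) := by
  have hmaps := mapsTo_ball_of_dist_le_mul hr₁.le hf
  have hgeom : ∀ n : ℕ, dist (f^[n] x) a ≤ r ^ n * dist x a := by
    intro n
    induction n with
    | zero => simp
    | succ n ih =>
      rw [Function.iterate_succ_apply']
      calc dist (f (f^[n] x)) a ≤ r * dist (f^[n] x) a := hf _ (hmaps.iterate n hx)
        _ ≤ r * (r ^ n * dist x a) := by gcongr
        _ = r ^ (n + 1) * dist x a := by ring
  have hlim : Tendsto (fun n : ℕ => r ^ n * dist x a) atTop (𝓝 0) := by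
    simpa using (tendsto_pow_atTop_nhds_zero_of_lt_one hr₀ hr₁).mul_const (dist x a)
  exact tendsto_iff_dist_tendsto_zero.mpr (squeeze_zero (fun _ => dist_nonneg) hgeom hlim)

end MetricSpace

section PottsBethe

variable {K : Type*} [NormedField K] [IsUltrametricDist K] {θ q x : K}

def pottsBethe (θ q x : K) : K := ((θ * x + q - 1) / (x + θ + q - 2)) ^ 3

theorem norm_pottsBethe_denom (hθ : ‖θ - 1‖ < ‖q‖) (hx : ‖x - 1‖ < ‖q‖) :
    ‖x + θ + q - 2‖ = ‖q‖ := by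
  have hsmall : ‖(x - 1) + (θ - 1)‖ < ‖q‖ := (norm_add_le_max _ _).trans_lt (max_lt hx hθ)
  rw [show x + θ + q - 2 = q + ((x - 1) + (θ - 1)) by ring,
    norm_add_eq_max_of_norm_ne_norm hsmall.ne', max_eq_left hsmall.le]

theorem norm_pottsBethe_sub_one_le (hθ : ‖θ - 1‖ < ‖q‖) (hq : ‖q‖ ≤ 1) (hx : ‖x - 1‖ < ‖q‖) :
    ‖pottsBethe θ q x - 1‖ ≤ ‖θ - 1‖ / ‖q‖ * ‖x - 1‖ := by
  have hD := norm_pottsBethe_denom hθ hx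
  have hD0 : x + θ + q - 2 ≠ 0 := norm_pos_iff.mp (hD ▸ (norm_nonneg _).trans_lt hθ)
  have hdiff : θ * x + q - 1 - (x + θ + q - 2) = (θ - 1) * (x - 1) := by ring
  have hdiff_le : ‖(θ - 1) * (x - 1)‖ ≤ ‖q‖ := by
    rw [norm_mul]
    nlinarith [norm_nonneg (θ - 1), norm_nonneg (x - 1)]
  have hN : ‖θ * x + q - 1‖ ≤ ‖x + θ + q - 2‖ := by
    rw [← sub_add_cancel (θ * x + q - 1) (x + θ + q - 2), hdiff, hD]
    exact (norm_add_le_max _ _).trans (max_le hdiff_le hD.le)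
  calc ‖pottsBethe θ q x - 1‖ ≤ ‖θ * x + q - 1 - (x + θ + q - 2)‖ / ‖x + θ + q - 2‖ :=
        norm_div_pow_sub_one_le hN hD0 3
    _ = ‖θ - 1‖ / ‖q‖ * ‖x - 1‖ := by rw [hdiff, hD, norm_mul]; ring

end PottsBethe

theorem pottsBethe_contracts_on_A0_general (p : ℕ) [Fact p.Prime]
    (θ q : ℚ_[p]) (h2 : ‖θ - 1‖ < ‖q‖) (h3 : ‖q‖ < 1) :
    ∀ x : ℚ_[p], ‖x - 1‖ < ‖q‖ →
      ‖((θ * x + q - 1) / (x + θ + q - 2)) ^ 3 - 1‖ ≤ ‖θ - 1‖ / ‖q‖ * ‖x - 1‖ ∧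
      ‖((θ * x + q - 1) / (x + θ + q - 2)) ^ 3 - 1‖ < ‖q‖ ∧
      Filter.Tendsto
        (fun n => (fun y : ℚ_[p] => ((θ * y + q - 1) / (y + θ + q - 2)) ^ 3)^[n] x)
        Filter.atTop (nhds 1) := by
  have hq : 0 < ‖q‖ := (norm_nonneg _).trans_lt h2
  have hr₀ : 0 ≤ ‖θ - 1‖ / ‖q‖ := by positivity
  have hr₁ : ‖θ - 1‖ / ‖q‖ < 1 := (div_lt_one hq).mpr h2
  have hf : ∀ y ∈ ball (1 : ℚ_[p]) ‖q‖,
      dist (pottsBethe θ q y) 1 ≤ ‖θ - 1‖ / ‖q‖ * dist y 1 := by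
    intro y hy
    rw [mem_ball, dist_eq_norm] at hy
    simpa only [dist_eq_norm] using norm_pottsBethe_sub_one_le h2 h3.le hy
  intro x hx
  have hx_ball : x ∈ ball (1 : ℚ_[p]) ‖q‖ := by rwa [mem_ball, dist_eq_norm]
  refine ⟨norm_pottsBethe_sub_one_le h2 h3.le hx, ?_,
    tendsto_iterate_of_dist_le_mul hr₀ hr₁ hf hx_ball⟩
  simpa only [mem_ball, dist_eq_norm, pottsBethe] using mapsTo_ball_of_dist_le_mul hr₁.le hf hx_ball

/-- On the ball `‖x - 1‖ < ‖q‖` the Potts–Bethe mapping contracts towards the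
fixed point `1`: `‖f x - 1‖ ≤ (‖θ-1‖/‖q‖)·‖x - 1‖`; in particular the ball is
mapped into itself and all its points converge to `1` under iteration. -/
theorem pottsBethe_contracts_on_A0 (p : ℕ) [Fact p.Prime]
    (θ q : ℚ_[p]) (h1 : 0 < ‖θ - 1‖) (h2 : ‖θ - 1‖ < ‖q‖) (h3 : ‖q‖ < 1) :
    ∀ x : ℚ_[p], ‖x - 1‖ < ‖q‖ →
      ‖((θ * x + q - 1) / (x + θ + q - 2)) ^ 3 - 1‖ ≤ ‖θ - 1‖ / ‖q‖ * ‖x - 1‖ ∧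
      ‖((θ * x + q - 1) / (x + θ + q - 2)) ^ 3 - 1‖ < ‖q‖ ∧
      Filter.Tendsto
        (fun n => (fun y : ℚ_[p] => ((θ * y + q - 1) / (y + θ + q - 2)) ^ 3)^[n] x)
        Filter.atTop (nhds 1) :=
  pottsBethe_contracts_on_A0_general p θ q h2 h3
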